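/- Let k ≥ 1, C ≥ 3, and let the class probabilities satisfy 1 > λ₁ > λ₂ = λ₃ = … = λ_C = (1−λ₁)/(C−1) > 0. Let ψ : ℝ^k → ℝ be strictly convex and argument-wise strictly increasing, and let A* be the unique minimizer of S over 𝒜*. Then there exists a ∈ [−1, 1] such that A*_{ii} = 1 for all i, A*_{1j} = A*_{j1} = a for all j ≠ 1, and A*_{ij} = ((C−1)a² − 1)/(C−2) for all distinct i, j ∈ {2,…,C}. -/

import Mathlib

open Matrix

/-- `ψ : ℝ^k → ℝ` is argument-wise strictly increasing. -/
def ArgwiseStrictMono {k : ℕ} (ψ : (Fin k → ℝ) → ℝ) : Prop :=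
  ∀ (i : Fin k) (t : Fin k → ℝ) (s s' : ℝ), s < s' →
    ψ (Function.update t i s) < ψ (Function.update t i s')

/-- `S(A) = ∑_{i, j₁,…,j_k} (λᵢ ∏ₜ λ_{jₜ}) ψ(A_{i j₁} − 1, …, A_{i j_k} − 1)`. -/
noncomputable def S {k C : ℕ} (ψ : (Fin k → ℝ) → ℝ) (lam : Fin C → ℝ)
    (A : Matrix (Fin C) (Fin C) ℝ) : ℝ :=
  ∑ i : Fin C, ∑ j : Fin k → Fin C,
    (lam i * ∏ t, lam (j t)) * ψ (fun t => A i (j t) - 1)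

/-- `𝒜*` : real symmetric PSD `C×C` matrices with unit diagonal. -/
def AstarSet (C : ℕ) : Set (Matrix (Fin C) (Fin C) ℝ) :=
  {A | A.PosSemidef ∧ ∀ i, A i i = 1}

/-!
`S` is strictly convex on the convex set `𝒜*`, so its minimizer is unique; relabelling the
minority classes preserves both `S` and `𝒜*`, hence the minimizer is invariant under every
permutation fixing the majority class. Such a matrix is determined by two numbers: the entry `a`
shared by the majority row and column, and the entry `b` shared by all other off-diagonal positions.
Positive semidefiniteness forces `|a| ≤ 1` and `b ≥ ((C - 1) a² - 1) / (C - 2)`, and this bound is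
attained inside `𝒜*`. Since `S` is strictly increasing in every entry, minimality forces equality.
-/

open Finset Function

namespace ArgwiseStrictMono

variable {k : ℕ} {ψ : (Fin k → ℝ) → ℝ}

theorem monotone (h : ArgwiseStrictMono ψ) : Monotone ψ := by
  intro u v huv
  have key : ∀ s : Finset (Fin k), ψ u ≤ ψ (s.piecewise v u) := by
    intro s
    induction s using Finset.induction_on with
    | empty => simp
    | insert a s ha ih =>
      rw [piecewise_insert]
      refine ih.trans ?_
      conv_lhs => rw [← update_eq_self a (s.piecewise v u), piecewise_eq_of_notMem _ _ _ ha]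
      rcases (huv a).lt_or_eq with hlt | heq
      · exact (h a _ _ _ hlt).le
      · rw [heq]
  simpa using key univ

theorem strictMono (h : ArgwiseStrictMono ψ) : StrictMono ψ := by
  intro u v huv
  obtain ⟨hle, t, hlt⟩ := Pi.lt_def.1 huv
  calc ψ u = ψ (update u t (u t)) := by rw [update_eq_self]
    _ < ψ (update u t (v t)) := h t u _ _ hlt
    _ ≤ ψ v := h.monotone (update_le_iff.2 ⟨le_rfl, fun j _ => hle j⟩)

end ArgwiseStrictMono

theorem StrictConvexOn.sum_mul_comp_affineMap {ι E F : Type*} [Fintype ι]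
    [AddCommGroup E] [Module ℝ E] [AddCommGroup F] [Module ℝ F]
    {φ : F → ℝ} (hφ : StrictConvexOn ℝ Set.univ φ) {w : ι → ℝ} (hw : ∀ i, 0 < w i)
    (g : ι → E →ᵃ[ℝ] F) (hg : ∀ x y, x ≠ y → ∃ i, g i x ≠ g i y) :
    StrictConvexOn ℝ Set.univ fun x => ∑ i, w i * φ (g i x) := by
  refine ⟨convex_univ, fun x _ y _ hxy a b ha hb hab => ?_⟩
  obtain ⟨i₁, hi₁⟩ := hg x y hxy
  calc ∑ i, w i * φ (g i (a • x + b • y))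
      < ∑ i, w i * (a * φ (g i x) + b * φ (g i y)) := by
        refine sum_lt_sum (fun i _ => ?_) ⟨i₁, mem_univ _, ?_⟩
        · rw [Convex.combo_affine_apply hab]
          exact mul_le_mul_of_nonneg_left
            (hφ.convexOn.2 (Set.mem_univ _) (Set.mem_univ _) ha.le hb.le hab) (hw i).le
        · rw [Convex.combo_affine_apply hab]
          exact mul_lt_mul_of_pos_left
            (hφ.2 (Set.mem_univ _) (Set.mem_univ _) hi₁ ha hb hab) (hw i₁)
    _ = a • ∑ i, w i * φ (g i x) + b • ∑ i, w i * φ (g i y) := by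
        simp only [smul_eq_mul, mul_sum, ← sum_add_distrib]
        exact sum_congr rfl fun i _ => by ring

section S

variable {k C : ℕ}

noncomputable def shiftedEntries (i : Fin C) (j : Fin k → Fin C) :
    Matrix (Fin C) (Fin C) ℝ →ᵃ[ℝ] (Fin k → ℝ) :=
  (LinearMap.pi fun t => entryLinearMap ℝ ℝ i (j t)).toAffineMap - AffineMap.const ℝ _ 1

@[simp]
theorem shiftedEntries_apply (i : Fin C) (j : Fin k → Fin C) (A : Matrix (Fin C) (Fin C) ℝ) :
    shiftedEntries i j A = fun t => A i (j t) - 1 := by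
  ext t
  simp [shiftedEntries]

theorem S_eq_sum_prod (ψ : (Fin k → ℝ) → ℝ) (lam : Fin C → ℝ) (A : Matrix (Fin C) (Fin C) ℝ) :
    S ψ lam A = ∑ p : Fin C × (Fin k → Fin C),
      (lam p.1 * ∏ t, lam (p.2 t)) * ψ (shiftedEntries p.1 p.2 A) := by
  simp [S, Fintype.sum_prod_type]

theorem S_strictConvexOn (hk : 0 < k) {ψ : (Fin k → ℝ) → ℝ} {lam : Fin C → ℝ}
    (hlam : ∀ i, 0 < lam i) (hψ : StrictConvexOn ℝ Set.univ ψ) :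
    StrictConvexOn ℝ Set.univ (S ψ lam) := by
  simp only [funext (S_eq_sum_prod ψ lam)]
  refine hψ.sum_mul_comp_affineMap (fun p => mul_pos (hlam _) (prod_pos fun t _ => hlam _))
    _ fun A B hAB => ?_
  obtain ⟨i, j, hij⟩ : ∃ i j, A i j ≠ B i j := by
    by_contra! h
    exact hAB (ext h)
  exact ⟨(i, fun _ => j), fun h => hij (by simpa using congrFun h ⟨0, hk⟩)⟩

theorem S_lt_of_le_of_lt (hk : 0 < k) {ψ : (Fin k → ℝ) → ℝ} {lam : Fin C → ℝ}
    (hlam : ∀ i, 0 < lam i) (hψ : StrictMono ψ) {A B : Matrix (Fin C) (Fin C) ℝ}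
    (hle : ∀ i j, A i j ≤ B i j) {i j : Fin C} (hlt : A i j < B i j) :
    S ψ lam A < S ψ lam B := by
  simp only [S_eq_sum_prod]
  have hw : ∀ p : Fin C × (Fin k → Fin C), 0 < lam p.1 * ∏ t, lam (p.2 t) :=
    fun p => mul_pos (hlam _) (prod_pos fun t _ => hlam _)
  refine sum_lt_sum (fun p _ => ?_) ⟨(i, fun _ => j), mem_univ _, ?_⟩
  · refine mul_le_mul_of_nonneg_left (hψ.monotone fun t => ?_) (hw p).le
    simpa using hle p.1 (p.2 t)
  · refine mul_lt_mul_of_pos_left (hψ (Pi.lt_def.2 ⟨fun t => ?_, ⟨0, hk⟩, ?_⟩)) (hw _)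
    · simpa using hle i j
    · simpa using hlt

theorem S_submatrix (ψ : (Fin k → ℝ) → ℝ) {lam : Fin C → ℝ} {σ : Equiv.Perm (Fin C)}
    (hσ : ∀ i, lam (σ i) = lam i) (A : Matrix (Fin C) (Fin C) ℝ) :
    S ψ lam (A.submatrix σ σ) = S ψ lam A := by
  unfold S
  refine Fintype.sum_equiv σ _ _ fun i => ?_
  refine Fintype.sum_equiv (Equiv.piCongrRight fun _ => σ) _ _ fun j => ?_
  simp [hσ]

end S

theorem convex_AstarSet (C : ℕ) : Convex ℝ (AstarSet C) := by
  rintro A ⟨hA, hAd⟩ B ⟨hB, hBd⟩ a b ha hb hab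
  exact ⟨(hA.smul ha).add (hB.smul hb), fun i => by simp [hAd, hBd, hab]⟩

theorem submatrix_mem_AstarSet {C : ℕ} {A : Matrix (Fin C) (Fin C) ℝ} (hA : A ∈ AstarSet C)
    (σ : Equiv.Perm (Fin C)) : A.submatrix σ σ ∈ AstarSet C :=
  ⟨hA.1.submatrix σ, fun i => hA.2 (σ i)⟩

theorem submatrix_eq_of_isMinOn {k C : ℕ} (hk : 0 < k) {ψ : (Fin k → ℝ) → ℝ}
    {lam : Fin C → ℝ} (hlam : ∀ i, 0 < lam i) (hψ : StrictConvexOn ℝ Set.univ ψ)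
    {A : Matrix (Fin C) (Fin C) ℝ} (hA : A ∈ AstarSet C) (hmin : IsMinOn (S ψ lam) (AstarSet C) A)
    {σ : Equiv.Perm (Fin C)} (hσ : ∀ i, lam (σ i) = lam i) : A.submatrix σ σ = A := by
  have hS := (S_strictConvexOn hk hlam hψ).subset (Set.subset_univ _) (convex_AstarSet C)
  refine hS.eq_of_isMinOn (isMinOn_iff.2 fun B hB => ?_) hmin (submatrix_mem_AstarSet hA σ) hA
  rw [S_submatrix ψ hσ]
  exact isMinOn_iff.1 hmin B hB

theorem Equiv.Perm.exists_fixing_apply_eq_pair {α : Type*} [DecidableEq α] {x i j i' j' : α}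
    (hi : i ≠ x) (hj : j ≠ x) (hi' : i' ≠ x) (hj' : j' ≠ x) (hij : i ≠ j) (hij' : i' ≠ j') :
    ∃ σ : Equiv.Perm α, σ x = x ∧ σ i = i' ∧ σ j = j' := by
  set τ := Equiv.swap i i'
  have hτx : τ x = x := swap_apply_of_ne_of_ne hi.symm hi'.symm
  have hτj : τ j ≠ i' := fun h => hij (τ.injective ((swap_apply_left i i').trans h.symm))
  have hτj' : τ j ≠ x := fun h => hj (τ.injective (h.trans hτx.symm))
  refine ⟨τ.trans (Equiv.swap (τ j) j'), ?_, ?_, ?_⟩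
  · simp only [trans_apply, hτx]
    exact swap_apply_of_ne_of_ne hτj'.symm hj'.symm
  · simp only [trans_apply, τ, swap_apply_left]
    exact swap_apply_of_ne_of_ne hτj.symm hij'
  · simp

section Bordered

variable {n : Type*} [DecidableEq n]

def borderedMatrix (i₀ : n) (a b : ℝ) : Matrix n n ℝ :=
  Matrix.of fun i j => if i = j then 1 else if i = i₀ ∨ j = i₀ then a else b

variable {i₀ : n} {a b : ℝ}

@[simp]
theorem borderedMatrix_apply_self (i : n) : borderedMatrix i₀ a b i i = 1 := by
  simp [borderedMatrix]

theorem borderedMatrix_apply_left {j : n} (hj : j ≠ i₀) : borderedMatrix i₀ a b i₀ j = a := by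
  simp [borderedMatrix, hj.symm]

theorem borderedMatrix_apply_right {i : n} (hi : i ≠ i₀) : borderedMatrix i₀ a b i i₀ = a := by
  simp [borderedMatrix, hi]

theorem borderedMatrix_apply_of_ne {i j : n} (hi : i ≠ i₀) (hj : j ≠ i₀) (hij : i ≠ j) :
    borderedMatrix i₀ a b i j = b := by
  simp [borderedMatrix, hi, hj, hij]

theorem borderedMatrix_le_borderedMatrix {b' : ℝ} (hb : b ≤ b') (i j : n) :
    borderedMatrix i₀ a b i j ≤ borderedMatrix i₀ a b' i j := by
  simp only [borderedMatrix, of_apply]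
  split_ifs <;> simp [hb]

theorem isHermitian_borderedMatrix : (borderedMatrix i₀ a b).IsHermitian := by
  ext i j
  simp only [conjTranspose_apply, star_trivial, borderedMatrix, of_apply]
  simp only [eq_comm, or_comm]

theorem eq_borderedMatrix_of_forall_submatrix_eq {M : Matrix n n ℝ} (hM : M.IsHermitian)
    (hdiag : ∀ i, M i i = 1)
    (hinv : ∀ σ : Equiv.Perm n, σ i₀ = i₀ → M.submatrix σ σ = M)
    {u v : n} (hu : u ≠ i₀) (hv : v ≠ i₀) (huv : u ≠ v) :
    M = borderedMatrix i₀ (M i₀ u) (M u v) := by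
  have hperm : ∀ σ : Equiv.Perm n, σ i₀ = i₀ → ∀ i j, M (σ i) (σ j) = M i j :=
    fun σ hσ i j => congrFun (congrFun (hinv σ hσ) i) j
  have hrow : ∀ j, j ≠ i₀ → M i₀ j = M i₀ u := fun j hj => by
    have hfix := Equiv.swap_apply_of_ne_of_ne hu.symm hj.symm
    simpa [hfix] using hperm (Equiv.swap u j) hfix i₀ u
  ext i j
  rcases eq_or_ne i j with rfl | hij
  · simp [hdiag]
  rcases eq_or_ne i i₀ with rfl | hi
  · rw [borderedMatrix_apply_left hij.symm, hrow j hij.symm]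
  rcases eq_or_ne j i₀ with rfl | hj
  · rw [borderedMatrix_apply_right hi, ← hrow i hi, ← hM.apply, star_trivial]
  obtain ⟨σ, hσ, hσu, hσv⟩ := Equiv.Perm.exists_fixing_apply_eq_pair hu hv hi hj huv hij
  rw [borderedMatrix_apply_of_ne hi hj hij, ← hσu, ← hσv, hperm σ hσ]

variable [Fintype n]

theorem dotProduct_borderedMatrix_mulVec (x : n → ℝ) :
    x ⬝ᵥ (borderedMatrix i₀ a b *ᵥ x) =
      x i₀ ^ 2 + 2 * a * x i₀ * ∑ j ∈ univ.erase i₀, x j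
        + b * (∑ j ∈ univ.erase i₀, x j) ^ 2 + (1 - b) * ∑ j ∈ univ.erase i₀, x j ^ 2 := by
  set s := ∑ j ∈ univ.erase i₀, x j
  have hrow₀ : ∑ j, borderedMatrix i₀ a b i₀ j * x j = x i₀ + a * s := by
    rw [← add_sum_erase _ _ (mem_univ i₀), borderedMatrix_apply_self, one_mul, mul_sum]
    exact congrArg _ (sum_congr rfl fun j hj => by
      rw [borderedMatrix_apply_left (ne_of_mem_erase hj)])
  have hrow : ∀ i ∈ univ.erase i₀,
      ∑ j, borderedMatrix i₀ a b i j * x j = a * x i₀ + x i + b * (s - x i) := by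
    intro i hi
    rw [← add_sum_erase _ _ (mem_univ i₀), borderedMatrix_apply_right (ne_of_mem_erase hi),
      ← add_sum_erase _ _ hi, borderedMatrix_apply_self]
    have hoff : ∀ j ∈ (univ.erase i₀).erase i, borderedMatrix i₀ a b i j * x j = b * x j :=
      fun j hj => by
        rw [borderedMatrix_apply_of_ne (ne_of_mem_erase hi)
          (ne_of_mem_erase (mem_of_mem_erase hj)) (ne_of_mem_erase hj).symm]
    rw [sum_congr rfl hoff, ← mul_sum, sum_erase_eq_sub hi]
    ring
  simp only [dotProduct, mulVec]
  rw [← add_sum_erase _ _ (mem_univ i₀), hrow₀, sum_congr rfl fun i hi => by rw [hrow i hi]]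
  have hterm : ∀ i, x i * (a * x i₀ + x i + b * (s - x i))
      = (a * x i₀ + b * s) * x i + (1 - b) * x i ^ 2 := fun i => by ring
  simp only [hterm, sum_add_distrib, ← mul_sum, s]
  ring

theorem mem_Icc_of_posSemidef_borderedMatrix {u : n} (hu : u ≠ i₀)
    (h : (borderedMatrix i₀ a b).PosSemidef) : a ∈ Set.Icc (-1) 1 := by
  have key : ∀ c : ℝ, 0 ≤ 1 + 2 * a * c + c ^ 2 := by
    intro c
    set x : n → ℝ := Pi.single i₀ 1 + Pi.single u c
    have hsum : ∀ f : ℝ → ℝ, f 0 = 0 → ∑ j ∈ univ.erase i₀, f (x j) = f c := by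
      intro f hf
      rw [sum_eq_single_of_mem u (mem_erase.2 ⟨hu, mem_univ u⟩) fun j hj hju => ?_]
      · simp [x, hu]
      · simp [x, ne_of_mem_erase hj, hju, hf]
    have hx := h.dotProduct_mulVec_nonneg x
    rw [star_trivial, dotProduct_borderedMatrix_mulVec, hsum (fun y => y) rfl,
      hsum (· ^ 2) (zero_pow two_ne_zero)] at hx
    simp only [x, Pi.add_apply, Pi.single_eq_same, Pi.single_eq_of_ne hu.symm] at hx
    linarith
  constructor <;> nlinarith [key 1, key (-1)]

theorem cast_card_univ_erase (i₀ : n) :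
    (#(univ.erase i₀) : ℝ) = Fintype.card n - 1 := by
  rw [card_erase_of_mem (mem_univ i₀), card_univ,
    Nat.cast_sub (Fintype.card_pos_iff.2 ⟨i₀⟩), Nat.cast_one]

theorem le_of_posSemidef_borderedMatrix (hn : 2 < Fintype.card n)
    (h : (borderedMatrix i₀ a b).PosSemidef) :
    (((Fintype.card n : ℝ) - 1) * a ^ 2 - 1) / ((Fintype.card n : ℝ) - 2) ≤ b := by
  have hN : (2 : ℝ) < Fintype.card n := by exact_mod_cast hn
  set N : ℝ := (Fintype.card n : ℝ)
  set x : n → ℝ := fun m => if m = i₀ then -((N - 1) * a) else 1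
  have hsum : ∀ f : ℝ → ℝ, ∑ j ∈ univ.erase i₀, f (x j) = (N - 1) * f 1 := by
    intro f
    rw [sum_congr rfl fun j hj => show f (x j) = f 1 by simp [x, ne_of_mem_erase hj],
      sum_const, nsmul_eq_mul, cast_card_univ_erase]
  have hx := h.dotProduct_mulVec_nonneg x
  rw [star_trivial, dotProduct_borderedMatrix_mulVec, hsum (fun y => y), hsum (· ^ 2)] at hx
  have : 0 ≤ (N - 1) * (b * (N - 2) - ((N - 1) * a ^ 2 - 1)) := by
    simp only [x, if_pos rfl] at hx
    linear_combination hx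
  rw [div_le_iff₀ (by linarith)]
  linarith [(mul_nonneg_iff_of_pos_left (by linarith : (0 : ℝ) < N - 1)).1 this]

theorem posSemidef_borderedMatrix (hn : 2 < Fintype.card n) (ha : a ∈ Set.Icc (-1) 1) :
    (borderedMatrix i₀ a
      ((((Fintype.card n : ℝ) - 1) * a ^ 2 - 1) / ((Fintype.card n : ℝ) - 2))).PosSemidef := by
  have hN : (2 : ℝ) < Fintype.card n := by exact_mod_cast hn
  set N : ℝ := (Fintype.card n : ℝ)
  set β := ((N - 1) * a ^ 2 - 1) / (N - 2)
  have hβ : β * (N - 2) = (N - 1) * a ^ 2 - 1 := div_mul_cancel₀ _ (by linarith)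
  refine .of_dotProduct_mulVec_nonneg isHermitian_borderedMatrix fun x => ?_
  rw [star_trivial, dotProduct_borderedMatrix_mulVec]
  set s := ∑ j ∈ univ.erase i₀, x j
  set q := ∑ j ∈ univ.erase i₀, x j ^ 2
  have hCS : s ^ 2 ≤ (N - 1) * q := by
    simpa only [cast_card_univ_erase] using sq_sum_le_card_mul_sum_sq (s := univ.erase i₀) (f := x)
  have ha2 : 0 ≤ 1 - a ^ 2 := by nlinarith [ha.1, ha.2]
  -- complete the square in `x i₀`; the remainder is nonnegative by Cauchy–Schwarz
  have key : (N - 2) * (x i₀ ^ 2 + 2 * a * x i₀ * s + β * s ^ 2 + (1 - β) * q)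
      = (N - 2) * (x i₀ + a * s) ^ 2 + (1 - a ^ 2) * ((N - 1) * q - s ^ 2) := by
    linear_combination (s ^ 2 - q) * hβ
  refine (mul_nonneg_iff_of_pos_left (by linarith : (0 : ℝ) < N - 2)).1 ?_
  rw [key]
  have := mul_nonneg ha2 (sub_nonneg.2 hCS)
  positivity

end Bordered

theorem stmt13_general (k C : ℕ) (hk : 1 ≤ k) (hC : 3 ≤ C)
    (i₀ : Fin C)
    (lam : Fin C → ℝ)
    (hminor : ∀ i : Fin C, i ≠ i₀ → lam i = (1 - lam i₀) / ((C : ℝ) - 1))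
    (hmaj : (1 - lam i₀) / ((C : ℝ) - 1) < lam i₀)
    (hpos : 0 < (1 - lam i₀) / ((C : ℝ) - 1))
    (ψ : (Fin k → ℝ) → ℝ)
    (hconv : StrictConvexOn ℝ Set.univ ψ) (hmono : ArgwiseStrictMono ψ)
    (A : Matrix (Fin C) (Fin C) ℝ) (hA : A ∈ AstarSet C)
    (hmin : ∀ B ∈ AstarSet C, S ψ lam A ≤ S ψ lam B) :
    ∃ a ∈ Set.Icc (-1 : ℝ) 1,
      (∀ i, A i i = 1) ∧
      (∀ j : Fin C, j ≠ i₀ → A i₀ j = a ∧ A j i₀ = a) ∧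
      (∀ i j : Fin C, i ≠ i₀ → j ≠ i₀ → i ≠ j →
        A i j = (((C : ℝ) - 1) * a ^ 2 - 1) / ((C : ℝ) - 2)) := by
  have hlam : ∀ i, 0 < lam i := fun i => by
    rcases eq_or_ne i i₀ with rfl | hi
    · exact hpos.trans hmaj
    · exact hminor i hi ▸ hpos
  have hinv : ∀ σ : Equiv.Perm (Fin C), σ i₀ = i₀ → A.submatrix σ σ = A := fun σ hσ =>
    submatrix_eq_of_isMinOn hk hlam hconv hA (isMinOn_iff.2 hmin) fun i => by
      rcases eq_or_ne i i₀ with rfl | hi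
      · rw [hσ]
      · rw [hminor i hi, hminor (σ i) (hσ ▸ σ.injective.ne hi)]
  have hcard : 2 < Fintype.card (Fin C) := by rw [Fintype.card_fin]; omega
  obtain ⟨u, hu, v, hv, huv⟩ : ∃ u ∈ univ.erase i₀, ∃ v ∈ univ.erase i₀, u ≠ v :=
    one_lt_card.1 (by rw [card_erase_of_mem (mem_univ _), card_univ]; omega)
  obtain ⟨a, b, rfl⟩ : ∃ a b, A = borderedMatrix i₀ a b := ⟨_, _,
    eq_borderedMatrix_of_forall_submatrix_eq hA.1.1 hA.2 hinv
      (ne_of_mem_erase hu) (ne_of_mem_erase hv) huv⟩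
  have ha := mem_Icc_of_posSemidef_borderedMatrix (ne_of_mem_erase hu) hA.1
  set β := (((C : ℝ) - 1) * a ^ 2 - 1) / ((C : ℝ) - 2)
  have hb : b = β := by
    refine le_antisymm ?_ (by simpa using le_of_posSemidef_borderedMatrix hcard hA.1)
    by_contra! hβb
    have hβ : borderedMatrix i₀ a β ∈ AstarSet C :=
      ⟨by simpa using posSemidef_borderedMatrix (i₀ := i₀) hcard ha, borderedMatrix_apply_self⟩
    refine (hmin _ hβ).not_gt (S_lt_of_le_of_lt hk hlam hmono.strictMono
      (borderedMatrix_le_borderedMatrix hβb.le) (i := u) (j := v) ?_)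
    rwa [borderedMatrix_apply_of_ne (ne_of_mem_erase hu) (ne_of_mem_erase hv) huv,
      borderedMatrix_apply_of_ne (ne_of_mem_erase hu) (ne_of_mem_erase hv) huv]
  refine ⟨a, ha, borderedMatrix_apply_self, fun j hj =>
    ⟨borderedMatrix_apply_left hj, borderedMatrix_apply_right hj⟩, fun i j hi hj hij => ?_⟩
  rw [borderedMatrix_apply_of_ne hi hj hij, hb]

/-- with one majority class (index `i₀`, the first class) and `C−1`
equiprobable minority classes, the minimizer `A*` of `S` over `𝒜*` has the one-parameter
form: unit diagonal, first-row/column off-diagonal entries `a ∈ [−1,1]`, and remaining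
off-diagonal entries `((C−1)a² − 1)/(C−2)`. -/
theorem stmt13 (k C : ℕ) (hk : 1 ≤ k) (hC : 3 ≤ C)
    (i₀ : Fin C) (hi₀ : (i₀ : ℕ) = 0)
    (lam : Fin C → ℝ)
    (hlt1 : lam i₀ < 1)
    (hminor : ∀ i : Fin C, i ≠ i₀ → lam i = (1 - lam i₀) / ((C : ℝ) - 1))
    (hmaj : (1 - lam i₀) / ((C : ℝ) - 1) < lam i₀)
    (hpos : 0 < (1 - lam i₀) / ((C : ℝ) - 1))
    (ψ : (Fin k → ℝ) → ℝ)
    (hconv : StrictConvexOn ℝ Set.univ ψ) (hmono : ArgwiseStrictMono ψ)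
    (A : Matrix (Fin C) (Fin C) ℝ) (hA : A ∈ AstarSet C)
    (hmin : ∀ B ∈ AstarSet C, S ψ lam A ≤ S ψ lam B) :
    ∃ a ∈ Set.Icc (-1 : ℝ) 1,
      (∀ i, A i i = 1) ∧
      (∀ j : Fin C, j ≠ i₀ → A i₀ j = a ∧ A j i₀ = a) ∧
      (∀ i j : Fin C, i ≠ i₀ → j ≠ i₀ → i ≠ j →
        A i j = (((C : ℝ) - 1) * a ^ 2 - 1) / ((C : ℝ) - 2)) :=
  stmt13_general k C hk hC i₀ lam hminor hmaj hpos ψ hconv hmono A hA hmin
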